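/- If α_n ≡ α ∈ [1/2, 1), then for all 0 ≤ m ≤ n the recursive quantities satisfy 0 ≤ c_{mn} − d_{mn} ≤ 4m(1 − α)². -/

import Mathlib

/-!
Write `c = 1 - e`, where `e = meetProb α` obeys an explicit one-step recursion in its second
index. Inductions along that recursion show that `e` takes values in `[0, 1]`, increases in the
first index, decreases and is convex in the second, and that its increments in the first index
decrease along the second. For `c` this gives the triangle inequality and the submodularity
`c i n + c m j ≤ c i j + c m n` for `i ≤ m ≤ j ≤ n`.

The bound `d ≤ c ≤ d + m (1-α)²` on row `m` follows by induction on `m`. The product plan is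
admissible for `d`, and `d ≤ c` on the earlier rows, so `d_{mn} ≤ c_{mn}`. Conversely the
potential `c_{in} + v_j` (`kmPotential`) is dominated by `d + (m-1)(1-α)²` on the earlier rows,
by submodularity and the triangle inequality; its transport cost does not depend on the plan,
and on the support of the product plan it falls short of `c` only where `i < m < j < n`, by at
most `1`, on a set of mass at most `(1-α)²`.
-/

open Finset

/-- `kmPi α i n` is `π_i^n = α_i ∏_{k=i+1}^n (1 - α_k)` (empty product = 1). -/
noncomputable def kmPi (α : ℕ → ℝ) (i n : ℕ) : ℝ :=
  α i * ∏ k ∈ Finset.Icc (i + 1) n, (1 - α k)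
/-- A feasible transport plan between the probability vectors `π^m` and `π^n`. -/
def IsPlan (α : ℕ → ℝ) (m n : ℕ) (z : ℕ → ℕ → ℝ) : Prop :=
  (∀ i ≤ m, ∀ j ≤ n, 0 ≤ z i j) ∧
  (∀ i ≤ m, ∑ j ∈ Finset.range (n + 1), z i j = kmPi α i m) ∧
  (∀ j ≤ n, ∑ i ∈ Finset.range (m + 1), z i j = kmPi α j n)

/-- Transport cost `Σ_{i=0}^m Σ_{j=0}^n z_{ij} d_{i-1,j-1}`, where indices of `D` are
shifted by one: `D i j` stands for `d_{i-1,j-1}`. -/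
noncomputable def planCost (D : ℕ → ℕ → ℝ) (m n : ℕ) (z : ℕ → ℕ → ℝ) : ℝ :=
  ∑ i ∈ Finset.range (m + 1), ∑ j ∈ Finset.range (n + 1), z i j * D i j

/-- `D : ℕ → ℕ → ℝ` encodes the family `d_{mn}` for `m, n ∈ {-1,0,1,...}` with indices
shifted by one: `D (m+1) (n+1) = d_{m,n}`, `D 0 (k+1) = d_{-1,k}`, etc.  It is the
recursive optimal-transport family: boundary values `d_{-1,-1} = 0`,
`d_{-1,k} = d_{k,-1} = 1`, and `d_{mn}` is the minimum transport cost between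
`π^m` and `π^n` (the minimum, i.e. attained greatest lower bound). -/
def IsKMDist (α : ℕ → ℝ) (D : ℕ → ℕ → ℝ) : Prop :=
  D 0 0 = 0 ∧ (∀ k : ℕ, D 0 (k + 1) = 1) ∧ (∀ k : ℕ, D (k + 1) 0 = 1) ∧
  ∀ m n : ℕ,
    IsLeast {c : ℝ | ∃ z : ℕ → ℕ → ℝ, IsPlan α m n z ∧ c = planCost D m n z}
      (D (m + 1) (n + 1))
/-- The sub-optimal product transport plan between `π^m` and `π^n` (for `m ≤ n`):
`z̃_{ii} = π_i^n` for `i ≤ m`, `z̃_{ij} = π_i^m π_j^n` for `i ≤ m < j ≤ n`, else `0`. -/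
noncomputable def ztilde (α : ℕ → ℝ) (m n : ℕ) (i j : ℕ) : ℝ :=
  if i = j ∧ i ≤ m then kmPi α i n
  else if i ≤ m ∧ m < j ∧ j ≤ n then kmPi α i m * kmPi α j n
  else 0

section KMPi

variable (a : ℕ → ℝ)

lemma kmPi_self (n : ℕ) : kmPi a n n = a n := by
  simp [kmPi]

lemma kmPi_succ_right {i n : ℕ} (h : i ≤ n) :
    kmPi a i (n + 1) = (1 - a (n + 1)) * kmPi a i n := by
  rw [kmPi, kmPi, prod_Icc_succ_top (by omega)]
  ring

lemma kmPi_nonneg (h0 : ∀ k, 0 ≤ a k) (h1 : ∀ k, a k ≤ 1) (i n : ℕ) : 0 ≤ kmPi a i n :=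
  mul_nonneg (h0 i) (prod_nonneg fun k _ => sub_nonneg.2 (h1 k))

variable {a}

lemma sum_kmPi (ha : a 0 = 1) (n : ℕ) : ∑ i ∈ range (n + 1), kmPi a i n = 1 := by
  induction n with
  | zero => simp [kmPi, ha]
  | succ n ih =>
    rw [sum_range_succ, kmPi_self,
      sum_congr rfl fun i hi => kmPi_succ_right a (Nat.lt_succ_iff.1 (mem_range.1 hi)),
      ← mul_sum, ih]
    ring

lemma sum_range_kmPi (ha : a 0 = 1) (n : ℕ) : ∑ i ∈ range n, kmPi a i n = 1 - a n := by
  linarith [sum_kmPi ha n, sum_range_succ (kmPi a · n) n, kmPi_self a n]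

end KMPi

section Plan

variable {a : ℕ → ℝ} {m n : ℕ} {z : ℕ → ℕ → ℝ}

lemma planCost_sub (D D' : ℕ → ℕ → ℝ) (z : ℕ → ℕ → ℝ) :
    planCost (fun i j => D i j - D' i j) m n z = planCost D m n z - planCost D' m n z := by
  simp only [planCost, mul_sub, sum_sub_distrib]

lemma planCost_add (D D' : ℕ → ℕ → ℝ) (z : ℕ → ℕ → ℝ) :
    planCost (fun i j => D i j + D' i j) m n z = planCost D m n z + planCost D' m n z := by
  simp only [planCost, mul_add, sum_add_distrib]

lemma planCost_mono {D D' : ℕ → ℕ → ℝ} (hz : ∀ i ≤ m, ∀ j ≤ n, 0 ≤ z i j)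
    (h : ∀ i ≤ m, ∀ j ≤ n, z i j ≠ 0 → D i j ≤ D' i j) :
    planCost D m n z ≤ planCost D' m n z := by
  refine sum_le_sum fun i hi => sum_le_sum fun j hj => ?_
  have hi := Nat.lt_succ_iff.1 (mem_range.1 hi)
  have hj := Nat.lt_succ_iff.1 (mem_range.1 hj)
  by_cases hzij : z i j = 0
  · simp [hzij]
  · exact mul_le_mul_of_nonneg_left (h i hi j hj hzij) (hz i hi j hj)

lemma IsPlan.planCost_separable (hz : IsPlan a m n z) (u v : ℕ → ℝ) :
    planCost (fun i j => u i + v j) m n z =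
      ∑ i ∈ range (m + 1), u i * kmPi a i m + ∑ j ∈ range (n + 1), v j * kmPi a j n := by
  simp only [planCost, mul_add, sum_add_distrib]
  congr 1
  · refine sum_congr rfl fun i hi => ?_
    rw [← sum_mul, hz.2.1 i (Nat.lt_succ_iff.1 (mem_range.1 hi)), mul_comm]
  · rw [sum_comm]
    refine sum_congr rfl fun j hj => ?_
    rw [← sum_mul, hz.2.2 j (Nat.lt_succ_iff.1 (mem_range.1 hj)), mul_comm]

lemma IsPlan.planCost_le_add (ha : a 0 = 1) (hz : IsPlan a m n z) {D D' : ℕ → ℕ → ℝ}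
    {b : ℝ} (h : ∀ i ≤ m, ∀ j ≤ n, D i j ≤ D' i j + b) :
    planCost D m n z ≤ planCost D' m n z + b := by
  have hconst : planCost (fun _ _ => b) m n z = b := by
    simpa [mul_comm b, ← sum_mul, sum_kmPi ha] using
      hz.planCost_separable (fun _ => b) (fun _ => 0)
  calc planCost D m n z ≤ planCost (fun i j => D' i j + b) m n z :=
        planCost_mono hz.1 fun i hi j hj _ => h i hi j hj
    _ = planCost D' m n z + b := by rw [planCost_add, hconst]

lemma IsKMDist.nonneg {D : ℕ → ℕ → ℝ} (hD : IsKMDist a D) (i j : ℕ) : 0 ≤ D i j := by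
  induction i using Nat.strong_induction_on generalizing j with
  | _ i ih =>
  rcases i with _ | m <;> rcases j with _ | n
  · rw [hD.1]
  · rw [hD.2.1]; exact zero_le_one
  · rw [hD.2.2.1]; exact zero_le_one
  · obtain ⟨z, hz, hDz⟩ := (hD.2.2.2 m n).1
    rw [hDz]
    simpa [planCost] using planCost_mono (D := fun _ _ => 0) hz.1
      fun i hi j _ _ => ih i (Nat.lt_succ_of_le hi) j

end Plan

section ProductPlan

variable {a : ℕ → ℝ} {m n : ℕ}

lemma ztilde_of_lt {i j : ℕ} (h : j < i) : ztilde a m n i j = 0 := by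
  simp only [ztilde, if_neg (show ¬ (i = j ∧ i ≤ m) by omega),
    if_neg (show ¬ (i ≤ m ∧ m < j ∧ j ≤ n) by omega)]

lemma sum_ztilde_mul (h : m ≤ n) {i : ℕ} (hi : i ≤ m) (g : ℕ → ℝ) :
    ∑ j ∈ range (n + 1), ztilde a m n i j * g j =
      kmPi a i n * g i + kmPi a i m * ∑ j ∈ Ico (m + 1) (n + 1), kmPi a j n * g j := by
  rw [← sum_range_add_sum_Ico _ (by omega : m + 1 ≤ n + 1), mul_sum]
  congr 1
  · rw [sum_eq_single_of_mem i (mem_range.2 (by omega))]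
    · simp [ztilde, hi]
    · intro j hj hji
      simp [ztilde, Ne.symm hji, show ¬ m < j from by simpa using hj]
  · refine sum_congr rfl fun j hj => ?_
    obtain ⟨hmj, hjn⟩ := mem_Ico.1 hj
    simp only [ztilde, if_neg (show ¬ (i = j ∧ i ≤ m) by omega),
      if_pos (show i ≤ m ∧ m < j ∧ j ≤ n by omega)]
    ring

lemma planCost_ztilde (h : m ≤ n) (g : ℕ → ℕ → ℝ) :
    planCost g m n (ztilde a m n) =
      ∑ i ∈ range (m + 1), kmPi a i n * g i i +
        ∑ i ∈ range (m + 1),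
          kmPi a i m * ∑ j ∈ Ico (m + 1) (n + 1), kmPi a j n * g i j := by
  rw [planCost, ← sum_add_distrib]
  exact sum_congr rfl fun i hi => sum_ztilde_mul h (Nat.lt_succ_iff.1 (mem_range.1 hi)) (g i)

end ProductPlan

def constRate (α : ℝ) : ℕ → ℝ := fun k => if k = 0 then 1 else α

section ConstRate

variable {α : ℝ} {m n : ℕ}

@[simp] lemma constRate_zero : constRate α 0 = 1 := rfl

@[simp] lemma constRate_succ (k : ℕ) : constRate α (k + 1) = α := rfl

lemma kmPi_constRate (i n : ℕ) :
    kmPi (constRate α) i n = constRate α i * (1 - α) ^ (n - i) := by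
  rw [kmPi, prod_congr rfl fun k hk => by rw [constRate, if_neg (by simp at hk; omega)],
    prod_const, Nat.card_Icc]
  congr 2
  omega

lemma kmPi_constRate_nonneg (h0 : 0 ≤ α) (h1 : α ≤ 1) (i n : ℕ) :
    0 ≤ kmPi (constRate α) i n :=
  kmPi_nonneg _ (fun k => by unfold constRate; split_ifs <;> linarith)
    (fun k => by unfold constRate; split_ifs <;> linarith) i n

lemma kmPi_constRate_eq_pow_mul {i : ℕ} (him : i ≤ m) (hmn : m ≤ n) :
    kmPi (constRate α) i n = (1 - α) ^ (n - m) * kmPi (constRate α) i m := by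
  rw [kmPi_constRate, kmPi_constRate, show n - i = n - m + (m - i) by omega, pow_add]
  ring

lemma kmPi_constRate_succ_left {k p : ℕ} (h : k + 2 ≤ p) :
    kmPi (constRate α) (k + 1) p = (1 - α) * kmPi (constRate α) (k + 2) p := by
  rw [kmPi_constRate, kmPi_constRate, show p - (k + 1) = p - (k + 2) + 1 by omega, pow_succ]
  simp only [constRate_succ]
  ring

lemma sum_Ico_kmPi_constRate (h : m ≤ n) :
    ∑ j ∈ Ico (m + 1) (n + 1), kmPi (constRate α) j n = 1 - (1 - α) ^ (n - m) := by
  have hhead : ∑ i ∈ range (m + 1), kmPi (constRate α) i n = (1 - α) ^ (n - m) := by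
    rw [sum_congr rfl fun i hi => kmPi_constRate_eq_pow_mul (Nat.lt_succ_iff.1 (mem_range.1 hi)) h,
      ← mul_sum, sum_kmPi rfl, mul_one]
  linarith [sum_range_add_sum_Ico (kmPi (constRate α) · n) (by omega : m + 1 ≤ n + 1),
    sum_kmPi (a := constRate α) rfl n]

lemma sum_range_kmPi_constRate_succ (p : ℕ) :
    ∑ k ∈ range p, kmPi (constRate α) (k + 1) p = 1 - (1 - α) ^ p := by
  have := sum_kmPi (a := constRate α) rfl p
  rw [sum_range_succ', kmPi_constRate] at this
  simp only [constRate_zero, one_mul, Nat.sub_zero] at this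
  linarith

lemma ztilde_isPlan (h0 : 0 ≤ α) (h1 : α ≤ 1) (h : m ≤ n) :
    IsPlan (constRate α) m n (ztilde (constRate α) m n) := by
  have hnn := kmPi_constRate_nonneg h0 h1
  refine ⟨fun i _ j _ => ?_, fun i hi => ?_, fun j hj => ?_⟩
  · unfold ztilde
    split_ifs
    exacts [hnn _ _, mul_nonneg (hnn _ _) (hnn _ _), le_rfl]
  · have := sum_ztilde_mul (a := constRate α) h hi fun _ => 1
    simp only [mul_one] at this
    rw [this, sum_Ico_kmPi_constRate h, kmPi_constRate_eq_pow_mul hi h]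
    ring
  · by_cases hjm : j ≤ m
    · rw [sum_eq_single_of_mem j (mem_range.2 (by omega))]
      · simp [ztilde, hjm]
      · intro i _ hij
        simp [ztilde, hij, hjm]
    · rw [sum_congr rfl fun i hi => by
          rw [ztilde, if_neg (by omega), if_pos (by simp at hi; omega)],
        ← sum_mul, sum_kmPi rfl, one_mul]

lemma sum_range_succ_kmPi_constRate_mul (p : ℕ) (f : ℕ → ℝ) :
    ∑ k ∈ range (p + 1), kmPi (constRate α) (k + 1) (p + 1) * f k =
      (1 - α) * ∑ k ∈ range p, kmPi (constRate α) (k + 1) p * f k + α * f p := by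
  rw [sum_range_succ, kmPi_self, constRate_succ, mul_sum]
  congr 1
  refine sum_congr rfl fun k hk => ?_
  rw [kmPi_succ_right _ (mem_range.1 hk), constRate_succ, mul_assoc]

/-- `π_{k+1}^p = (1 - α) π_{k+2}^p` below the top term `π_p^p f p ≤ α`. -/
lemma sum_kmPi_constRate_mul_succ_le (h0 : 0 ≤ α) (h1 : α ≤ 1) (p : ℕ) {f : ℕ → ℝ}
    (hf0 : 0 ≤ f 0) (hfp : f p ≤ 1) :
    ∑ k ∈ range p, kmPi (constRate α) (k + 1) p * f (k + 1) ≤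
      α + (1 - α) * ∑ k ∈ range p, kmPi (constRate α) (k + 1) p * f k := by
  rcases p with _ | q
  · simpa using h0
  rw [sum_range_succ, kmPi_self, constRate_succ, sum_range_succ', mul_add, mul_sum,
    sum_congr rfl fun k hk => by
      rw [kmPi_constRate_succ_left (by simp at hk; omega : k + 2 ≤ q + 1), mul_assoc]]
  nlinarith [mul_nonneg (mul_nonneg (sub_nonneg.2 h1) (kmPi_constRate_nonneg h0 h1 1 (q + 1)))
    hf0]

lemma sum_Ico_kmPi_constRate_mul_le (h0 : 0 ≤ α) (h1 : α ≤ 1) (hmn : m ≤ n)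
    {f : ℕ → ℝ} (hf : ∀ j ∈ Ico (m + 1) n, f j ≤ 1) (hfn : f n = 0) :
    ∑ j ∈ Ico (m + 1) (n + 1), kmPi (constRate α) j n * f j ≤ 1 - α := by
  rcases hmn.eq_or_lt with rfl | hlt
  · simpa using h1
  have hnn := kmPi_constRate_nonneg h0 h1
  obtain ⟨n, rfl⟩ : ∃ k, n = k + 1 := ⟨n - 1, by omega⟩
  rw [sum_Ico_succ_top (by omega), hfn, mul_zero, add_zero]
  calc ∑ j ∈ Ico (m + 1) (n + 1), kmPi (constRate α) j (n + 1) * f j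
      ≤ ∑ j ∈ Ico (m + 1) (n + 1), kmPi (constRate α) j (n + 1) :=
        sum_le_sum fun j hj => mul_le_of_le_one_right (hnn _ _) (hf j hj)
    _ ≤ ∑ j ∈ range (n + 1), kmPi (constRate α) j (n + 1) :=
        sum_le_sum_of_subset_of_nonneg (fun j hj => mem_range.2 (mem_Ico.1 hj).2)
          fun _ _ _ => hnn _ _
    _ = 1 - α := by rw [sum_range_kmPi rfl, constRate_succ]

end ConstRate

/-- `meetProb α p s = 1 - c_{p,s}` in the paper's indexing (so `1 - c (p+1) (s+1)` here): the
probability that the two coordinates of the product-plan chain started at `(p, s)` meet. -/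
noncomputable def meetProb (α : ℝ) : ℕ → ℕ → ℝ
  | _, 0 => 1
  | p, s + 1 =>
    if s < p then 1
    else (1 - α) * meetProb α p s +
      α * ∑ k ∈ range p, kmPi (constRate α) (k + 1) p * meetProb α k s

section MeetProb

variable {α : ℝ}

@[simp] lemma meetProb_zero_right (p : ℕ) : meetProb α p 0 = 1 := by
  rw [meetProb]

lemma meetProb_of_le {p s : ℕ} (h : s ≤ p) : meetProb α p s = 1 := by
  cases s with
  | zero => rw [meetProb]
  | succ s => rw [meetProb, if_pos (by omega)]

lemma meetProb_succ {p s : ℕ} (h : p ≤ s) :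
    meetProb α p (s + 1) = (1 - α) * meetProb α p s +
      α * ∑ k ∈ range p, kmPi (constRate α) (k + 1) p * meetProb α k s := by
  rw [meetProb, if_neg (by omega)]

lemma meetProb_gap_succ {p s : ℕ} (h : p + 1 ≤ s) :
    meetProb α (p + 1) (s + 1) - meetProb α p (s + 1) =
      (1 - α) * (meetProb α (p + 1) s - meetProb α p s) +
        α * (meetProb α p s - meetProb α p (s + 1)) := by
  rw [meetProb_succ h, meetProb_succ (by omega : p ≤ s), sum_range_succ_kmPi_constRate_mul]
  ring

variable (h0 : 0 ≤ α) (h1 : α ≤ 1)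
include h0 h1

lemma meetProb_mem_Icc (p s : ℕ) : meetProb α p s ∈ Set.Icc 0 1 := by
  induction s generalizing p with
  | zero => simp
  | succ s ih =>
    rcases lt_or_ge s p with hsp | hps
    · simp [meetProb_of_le (α := α) (Nat.succ_le_of_lt hsp)]
    have hS := sum_range_kmPi_constRate_succ (α := α) p
    have hS0 : 0 ≤ ∑ k ∈ range p, kmPi (constRate α) (k + 1) p * meetProb α k s :=
      sum_nonneg fun k _ => mul_nonneg (kmPi_constRate_nonneg h0 h1 _ _) (ih k).1
    have hS1 : ∑ k ∈ range p, kmPi (constRate α) (k + 1) p * meetProb α k s ≤ 1 := by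
      calc _ ≤ ∑ k ∈ range p, kmPi (constRate α) (k + 1) p :=
            sum_le_sum fun k _ => mul_le_of_le_one_right (kmPi_constRate_nonneg h0 h1 _ _) (ih k).2
        _ ≤ 1 := by rw [hS]; linarith [pow_nonneg (sub_nonneg.2 h1) p]
    obtain ⟨hE0, hE1⟩ := ih p
    rw [meetProb_succ hps]
    constructor <;> nlinarith [mul_nonneg (sub_nonneg.2 h1) hE0, mul_nonneg h0 hS0,
      mul_le_mul_of_nonneg_left hE1 (sub_nonneg.2 h1), mul_le_mul_of_nonneg_left hS1 h0]

lemma meetProb_nonneg (p s : ℕ) : 0 ≤ meetProb α p s := (meetProb_mem_Icc h0 h1 p s).1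

lemma meetProb_le_one (p s : ℕ) : meetProb α p s ≤ 1 := (meetProb_mem_Icc h0 h1 p s).2

lemma meetProb_succ_right_le_of_le {p s : ℕ}
    (hle : ∀ k ≤ p, meetProb α k s ≤ meetProb α p s) :
    meetProb α p (s + 1) ≤ meetProb α p s := by
  rcases lt_or_ge s p with hsp | hps
  · rw [meetProb_of_le (Nat.succ_le_of_lt hsp), meetProb_of_le hsp.le]
  have hS : ∑ k ∈ range p, kmPi (constRate α) (k + 1) p * meetProb α k s ≤
      (1 - (1 - α) ^ p) * meetProb α p s := by
    rw [← sum_range_kmPi_constRate_succ, sum_mul]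
    exact sum_le_sum fun k hk => mul_le_mul_of_nonneg_left
      (hle k (mem_range.1 hk).le) (kmPi_constRate_nonneg h0 h1 _ _)
  rw [meetProb_succ hps]
  nlinarith [mul_nonneg (mul_nonneg h0 (pow_nonneg (sub_nonneg.2 h1) p))
    (meetProb_nonneg h0 h1 p s)]

lemma monotone_meetProb_left (s : ℕ) : Monotone (meetProb α · s) := by
  induction s with
  | zero => intro p q _; simp
  | succ s ih =>
    refine monotone_nat_of_le_succ fun p => ?_
    rcases lt_trichotomy s p with hsp | rfl | hps
    · rw [meetProb_of_le (by omega), meetProb_of_le (by omega)]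
    · rw [meetProb_of_le (le_refl (s + 1))]
      exact meetProb_le_one h0 h1 s (s + 1)
    · have hgap := meetProb_gap_succ (α := α) (show p + 1 ≤ s by omega)
      have hstep := meetProb_succ_right_le_of_le h0 h1 fun k hk => ih hk (a := k) (b := p)
      nlinarith [ih (Nat.le_succ p), mul_nonneg h0 (sub_nonneg.2 hstep)]

lemma antitone_meetProb_right (p : ℕ) : Antitone (meetProb α p) :=
  antitone_nat_of_succ_le fun s =>
    meetProb_succ_right_le_of_le h0 h1 fun _ hk => monotone_meetProb_left h0 h1 s hk

end MeetProb

section Convexity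

variable {α : ℝ}

lemma meetProb_gap_le_of_convex (h1 : α ≤ 1) {p : ℕ}
    (hconv : ∀ s, p ≤ s →
      2 * meetProb α p (s + 1) ≤ meetProb α p s + meetProb α p (s + 2))
    {s : ℕ} (hs : p + 1 ≤ s) :
    meetProb α p s - meetProb α p (s + 1) ≤ meetProb α (p + 1) s - meetProb α p s := by
  induction s, hs using Nat.le_induction with
  | base =>
    linarith [hconv p le_rfl, meetProb_of_le (α := α) (le_refl p),
      meetProb_of_le (α := α) (le_refl (p + 1))]
  | succ s hs ih =>
    nlinarith [meetProb_gap_succ (α := α) hs, hconv s (by omega),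
      mul_le_mul_of_nonneg_left ih (sub_nonneg.2 h1)]

variable (h0 : 0 ≤ α) (h1 : α ≤ 1)
include h0 h1

lemma meetProb_convex_base {p : ℕ}
    (hgap : ∀ k < p, meetProb α k p - meetProb α k (p + 1) ≤
      meetProb α (k + 1) p - meetProb α k p) :
    2 * meetProb α p (p + 1) ≤ meetProb α p p + meetProb α p (p + 2) := by
  set S₀ := ∑ k ∈ range p, kmPi (constRate α) (k + 1) p * meetProb α k p
  set S₁ := ∑ k ∈ range p, kmPi (constRate α) (k + 1) p * meetProb α k (p + 1)
  have hsum : 2 * S₀ - S₁ ≤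
      ∑ k ∈ range p, kmPi (constRate α) (k + 1) p * meetProb α (k + 1) p := by
    rw [mul_sum, ← sum_sub_distrib]
    refine sum_le_sum fun k hk => ?_
    nlinarith [mul_le_mul_of_nonneg_left (hgap k (mem_range.1 hk))
      (kmPi_constRate_nonneg h0 h1 (k + 1) p)]
  have hshift := sum_kmPi_constRate_mul_succ_le h0 h1 p (f := (meetProb α · p))
    (meetProb_nonneg h0 h1 0 p) (meetProb_of_le le_rfl).le
  have e₁ : meetProb α p (p + 1) = (1 - α) + α * S₀ := by
    rw [meetProb_succ le_rfl, meetProb_of_le le_rfl, mul_one]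
  have e₂ : meetProb α p (p + 2) = (1 - α) * meetProb α p (p + 1) + α * S₁ :=
    meetProb_succ (by omega)
  rw [meetProb_of_le le_rfl, e₂, e₁]
  nlinarith [mul_nonneg h0 (by linarith : 0 ≤ α - (1 + α) * S₀ + S₁)]

lemma meetProb_convex_succ {p s : ℕ} (hs : p ≤ s)
    (hlt : ∀ k < p, 2 * meetProb α k (s + 1) ≤ meetProb α k s + meetProb α k (s + 2))
    (hp : 2 * meetProb α p (s + 1) ≤ meetProb α p s + meetProb α p (s + 2)) :
    2 * meetProb α p (s + 2) ≤ meetProb α p (s + 1) + meetProb α p (s + 3) := by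
  have hsum : 2 * ∑ k ∈ range p, kmPi (constRate α) (k + 1) p * meetProb α k (s + 1) ≤
      ∑ k ∈ range p, kmPi (constRate α) (k + 1) p * meetProb α k s +
        ∑ k ∈ range p, kmPi (constRate α) (k + 1) p * meetProb α k (s + 2) := by
    rw [mul_sum, ← sum_add_distrib]
    refine sum_le_sum fun k hk => ?_
    nlinarith [mul_le_mul_of_nonneg_left (hlt k (mem_range.1 hk))
      (kmPi_constRate_nonneg h0 h1 (k + 1) p)]
  have e₁ := meetProb_succ (α := α) hs
  have e₂ : meetProb α p (s + 2) = _ := meetProb_succ (α := α) (by omega : p ≤ s + 1)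
  have e₃ : meetProb α p (s + 3) = _ := meetProb_succ (α := α) (by omega : p ≤ s + 2)
  nlinarith [mul_le_mul_of_nonneg_left hsum h0, mul_le_mul_of_nonneg_left hp (sub_nonneg.2 h1)]

theorem meetProb_convex {p s : ℕ} (h : p ≤ s) :
    2 * meetProb α p (s + 1) ≤ meetProb α p s + meetProb α p (s + 2) := by
  induction p using Nat.strong_induction_on generalizing s with
  | _ p ih =>
  induction s, h using Nat.le_induction with
  | base =>
    exact meetProb_convex_base h0 h1 fun k hk =>
      meetProb_gap_le_of_convex h1 (fun _ => ih k hk) (by omega)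
  | succ s hs ihs => exact meetProb_convex_succ h0 h1 hs (fun k hk => ih k hk (by omega)) ihs

lemma meetProb_gap_le {p s : ℕ} (hs : p + 1 ≤ s) :
    meetProb α p s - meetProb α p (s + 1) ≤ meetProb α (p + 1) s - meetProb α p s :=
  meetProb_gap_le_of_convex h1 (fun _ => meetProb_convex h0 h1) hs

lemma meetProb_sub_antitone {p s t : ℕ} (hs : p + 1 ≤ s) (hst : s ≤ t) :
    meetProb α (p + 1) t - meetProb α p t ≤ meetProb α (p + 1) s - meetProb α p s := by
  induction t, hst using Nat.le_induction with
  | base => exact le_rfl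
  | succ t ht ih =>
    nlinarith [meetProb_gap_succ (α := α) (hs.trans ht),
      mul_le_mul_of_nonneg_left (meetProb_gap_le h0 h1 (hs.trans ht)) h0]

lemma meetProb_sub_le_sub {q p s t : ℕ} (hqp : q ≤ p) (hps : p ≤ s) (hst : s ≤ t) :
    meetProb α p t - meetProb α q t ≤ meetProb α p s - meetProb α q s := by
  induction p, hqp using Nat.le_induction with
  | base => simp
  | succ p hp ih => linarith [ih (by omega), meetProb_sub_antitone h0 h1 hps hst]

end Convexity

/-- The paper's family `c`, indexed as `IsKMDist`. -/
def IsKMProductCost (a : ℕ → ℝ) (c : ℕ → ℕ → ℝ) : Prop :=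
  c 0 0 = 0 ∧ (∀ k : ℕ, c 0 (k + 1) = 1) ∧
    ∀ m n : ℕ, m ≤ n → c (m + 1) (n + 1) = planCost c m n (ztilde a m n)

namespace IsKMProductCost

section General

variable {a : ℕ → ℝ} {c : ℕ → ℕ → ℝ} (hc : IsKMProductCost a c)
include hc

lemma diag (i : ℕ) : c i i = 0 := by
  induction i using Nat.strong_induction_on with
  | _ i ih =>
  rcases i with _ | m
  · exact hc.1
  rw [hc.2.2 m m le_rfl, planCost_ztilde le_rfl]
  simp only [Ico_self, sum_empty, mul_zero, sum_const_zero, add_zero]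
  exact sum_eq_zero fun i hi => by rw [ih i (mem_range.1 hi), mul_zero]

lemma succ_right {m n : ℕ} (h : m ≤ n) :
    c (m + 1) (n + 2) = (1 - a (n + 1)) * c (m + 1) (n + 1) +
      a (n + 1) * ∑ i ∈ range (m + 1), kmPi a i m * c i (n + 1) := by
  rw [hc.2.2 m (n + 1) (by omega), hc.2.2 m n h, planCost_ztilde (by omega), planCost_ztilde h]
  simp only [hc.diag, mul_zero, sum_const_zero, zero_add]
  rw [mul_sum, mul_sum, ← sum_add_distrib]
  refine sum_congr rfl fun i _ => ?_
  rw [sum_Ico_succ_top (by omega : m + 1 ≤ n + 1), kmPi_self,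
    sum_congr rfl fun j hj => by rw [kmPi_succ_right a (by simp at hj; omega), mul_assoc],
    ← mul_sum]
  ring

end General

section ConstRate

variable {α : ℝ} {c : ℕ → ℕ → ℝ} (hc : IsKMProductCost (constRate α) c)
include hc

lemma eq_one_sub_meetProb {p q : ℕ} (h : p ≤ q) : c (p + 1) (q + 1) = 1 - meetProb α p q := by
  induction q generalizing p with
  | zero =>
    obtain rfl : p = 0 := by omega
    simp [hc.diag]
  | succ q ih =>
    rcases h.eq_or_lt with rfl | hlt
    · rw [hc.diag, meetProb_of_le le_rfl, sub_self]
    have hpq : p ≤ q := by omega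
    rw [hc.succ_right hpq, ih hpq, meetProb_succ hpq, sum_range_succ', kmPi_constRate 0, hc.2.1 q,
      sum_congr rfl fun k hk => by rw [ih (by simp at hk; omega)], constRate_succ]
    simp only [mul_one_sub, sum_sub_distrib, sum_range_kmPi_constRate_succ, constRate_zero,
      Nat.sub_zero]
    ring

variable (h0 : 0 ≤ α) (h1 : α ≤ 1)
include h0 h1

lemma mem_Icc {i j : ℕ} (h : i ≤ j) : c i j ∈ Set.Icc 0 1 := by
  rcases i with _ | k <;> rcases j with _ | l
  · simp [hc.1]
  · simp [hc.2.1 l]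
  · omega
  · rw [hc.eq_one_sub_meetProb (by omega)]
    have := meetProb_mem_Icc h0 h1 k l
    constructor <;> linarith [this.1, this.2]

lemma anti_left {i j n : ℕ} (hji : j ≤ i) (hin : i ≤ n) : c i n ≤ c j n := by
  rcases hji.eq_or_lt with rfl | hlt
  · exact le_rfl
  obtain ⟨k, rfl⟩ : ∃ k, i = k + 1 := ⟨i - 1, by omega⟩
  obtain ⟨l, rfl⟩ : ∃ l, n = l + 1 := ⟨n - 1, by omega⟩
  rcases j with _ | j
  · rw [hc.2.1 l]
    exact (hc.mem_Icc h0 h1 hin).2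
  · rw [hc.eq_one_sub_meetProb (by omega), hc.eq_one_sub_meetProb (by omega)]
    linarith [monotone_meetProb_left h0 h1 l (show j ≤ k by omega)]

lemma mono_right {i j n : ℕ} (hij : i ≤ j) (hjn : j ≤ n) : c i j ≤ c i n := by
  rcases i with _ | k
  · rcases j with _ | j
    · rw [hc.1]
      exact (hc.mem_Icc h0 h1 (Nat.zero_le n)).1
    · obtain ⟨l, rfl⟩ : ∃ l, n = l + 1 := ⟨n - 1, by omega⟩
      rw [hc.2.1, hc.2.1]
  · obtain ⟨j, rfl⟩ : ∃ l, j = l + 1 := ⟨j - 1, by omega⟩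
    obtain ⟨l, rfl⟩ : ∃ l, n = l + 1 := ⟨n - 1, by omega⟩
    rw [hc.eq_one_sub_meetProb (by omega), hc.eq_one_sub_meetProb (by omega)]
    linarith [antitone_meetProb_right h0 h1 k (show j ≤ l by omega)]

lemma submodular {i m j n : ℕ} (him : i ≤ m) (hmj : m ≤ j) (hjn : j ≤ n) :
    c i n + c m j ≤ c i j + c m n := by
  rcases i with _ | k
  · rcases m with _ | m
    · rw [add_comm]
    obtain ⟨j, rfl⟩ : ∃ l, j = l + 1 := ⟨j - 1, by omega⟩
    obtain ⟨l, rfl⟩ : ∃ l, n = l + 1 := ⟨n - 1, by omega⟩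
    linarith [hc.2.1 j, hc.2.1 l, hc.mono_right h0 h1 hmj hjn]
  · obtain ⟨m, rfl⟩ : ∃ l, m = l + 1 := ⟨m - 1, by omega⟩
    obtain ⟨j, rfl⟩ : ∃ l, j = l + 1 := ⟨j - 1, by omega⟩
    obtain ⟨l, rfl⟩ : ∃ l, n = l + 1 := ⟨n - 1, by omega⟩
    rw [hc.eq_one_sub_meetProb (by omega), hc.eq_one_sub_meetProb (by omega),
      hc.eq_one_sub_meetProb (by omega), hc.eq_one_sub_meetProb (by omega)]
    linarith [meetProb_sub_le_sub h0 h1 (show k ≤ m by omega) (show m ≤ j by omega)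
      (show j ≤ l by omega)]

lemma triangle {i j n : ℕ} (hij : i ≤ j) (hjn : j ≤ n) : c i n ≤ c i j + c j n := by
  linarith [hc.submodular h0 h1 hij le_rfl hjn, hc.diag j]

end ConstRate

end IsKMProductCost

def kmPotential (c : ℕ → ℕ → ℝ) (m n i j : ℕ) : ℝ :=
  c i n + if j ≤ m then -c j n else c m j - c m n

namespace IsKMProductCost

variable {α : ℝ} {c D : ℕ → ℕ → ℝ} (hc : IsKMProductCost (constRate α) c)
  (h0 : 0 ≤ α) (h1 : α ≤ 1) {m n : ℕ} (hmn : m ≤ n)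
include hc h0 h1 hmn

lemma kmPotential_le {a : ℕ → ℝ} (hD : IsKMDist a D) {ε : ℝ} (hε : 0 ≤ ε)
    (hrows : ∀ i j, i ≤ m → i ≤ j → j ≤ n → c i j ≤ D i j + ε) {i j : ℕ}
    (hi : i ≤ m) (hj : j ≤ n) : kmPotential c m n i j ≤ D i j + ε := by
  unfold kmPotential
  split_ifs with hjm
  · rcases le_total i j with hij | hji
    · linarith [hc.triangle h0 h1 hij hj, hrows i j hi hij hj]
    · linarith [hc.anti_left h0 h1 hji (hi.trans hmn), hD.nonneg i j]
  · linarith [hc.submodular h0 h1 hi (by omega : m ≤ j) hj, hrows i j hi (by omega) hj]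

lemma planCost_sub_kmPotential_le :
    planCost (fun i j => c i j - kmPotential c m n i j) m n (ztilde (constRate α) m n) ≤
      (1 - constRate α m) * (1 - α) := by
  have hdiag : ∀ i ∈ range (m + 1), c i i - kmPotential c m n i i = 0 := fun i hi => by
    simp [kmPotential, hc.diag, Nat.lt_succ_iff.1 (mem_range.1 hi)]
  have hrow : ∀ i ≤ m, ∑ j ∈ Ico (m + 1) (n + 1),
      kmPi (constRate α) j n * (c i j - kmPotential c m n i j) ≤ 1 - α := fun i hi =>
    sum_Ico_kmPi_constRate_mul_le h0 h1 hmn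
      (fun j hj => by
        have hj := mem_Ico.1 hj
        simp only [kmPotential, if_neg (show ¬ j ≤ m by omega)]
        linarith [(hc.mem_Icc h0 h1 (by omega : i ≤ j)).2,
          (hc.mem_Icc h0 h1 (by omega : m ≤ j)).1,
          hc.anti_left h0 h1 hi hmn])
      (by rcases hmn.eq_or_lt with rfl | hlt <;> simp [kmPotential, hc.diag, *, not_le.2])
  have hlast : ∑ j ∈ Ico (m + 1) (n + 1),
      kmPi (constRate α) j n * (c m j - kmPotential c m n m j) = 0 :=
    sum_eq_zero fun j hj => by
      simp [kmPotential, show ¬ j ≤ m by simp at hj; omega]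
  rw [planCost_ztilde hmn, sum_congr rfl fun i hi => by rw [hdiag i hi, mul_zero], sum_const_zero,
    zero_add, sum_range_succ, hlast, mul_zero, add_zero, ← sum_range_kmPi rfl, sum_mul]
  exact sum_le_sum fun i hi => mul_le_mul_of_nonneg_left (hrow i (mem_range.1 hi).le)
    (kmPi_constRate_nonneg h0 h1 _ _)

lemma dist_le_of_rows (hD : IsKMDist (constRate α) D)
    (hrows : ∀ i j, i ≤ m → i ≤ j → j ≤ n → D i j ≤ c i j) :
    D (m + 1) (n + 1) ≤ c (m + 1) (n + 1) := by
  have hzt := ztilde_isPlan h0 h1 hmn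
  rw [hc.2.2 m n hmn]
  exact ((hD.2.2.2 m n).2 ⟨_, hzt, rfl⟩).trans <| planCost_mono hzt.1 fun i hi j hj hne =>
    hrows i j hi (not_lt.1 fun hji => hne (ztilde_of_lt hji)) hj

/-- Weak duality for `kmPotential`, comparing the product plan with an optimal one. -/
lemma le_dist_add_of_rows (hD : IsKMDist (constRate α) D) {ε : ℝ} (hε : 0 ≤ ε)
    (hrows : ∀ i j, i ≤ m → i ≤ j → j ≤ n → c i j ≤ D i j + ε) :
    c (m + 1) (n + 1) ≤ D (m + 1) (n + 1) + ε + (1 - constRate α m) * (1 - α) := by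
  obtain ⟨z, hz, hDz⟩ := (hD.2.2.2 m n).1
  have hpot : planCost (kmPotential c m n) m n (ztilde (constRate α) m n) =
      planCost (kmPotential c m n) m n z :=
    ((ztilde_isPlan h0 h1 hmn).planCost_separable (c · n) _).trans
      (hz.planCost_separable (c · n) _).symm
  have hfeas : planCost (kmPotential c m n) m n z ≤ planCost D m n z + ε :=
    hz.planCost_le_add rfl fun i hi j hj => hc.kmPotential_le h0 h1 hmn hD hε hrows hi hj
  have hdefect := hc.planCost_sub_kmPotential_le h0 h1 hmn
  rw [planCost_sub] at hdefect
  rw [hc.2.2 m n hmn, hDz]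
  linarith

end IsKMProductCost

theorem IsKMProductCost.dist_le_and_le_dist_add {α : ℝ} {c D : ℕ → ℕ → ℝ}
    (hc : IsKMProductCost (constRate α) c) (h0 : 0 ≤ α) (h1 : α ≤ 1)
    (hD : IsKMDist (constRate α) D) (m : ℕ) :
    ∀ n, m ≤ n → D (m + 1) (n + 1) ≤ c (m + 1) (n + 1) ∧
      c (m + 1) (n + 1) ≤ D (m + 1) (n + 1) + m * (1 - α) ^ 2 := by
  induction m using Nat.strong_induction_on with
  | _ m ih =>
  intro n hmn
  have hrows : ∀ i j, i ≤ m → i ≤ j → j ≤ n →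
      D i j ≤ c i j ∧ c i j ≤ D i j + (m - 1 : ℕ) * (1 - α) ^ 2 := by
    intro i j hi hij hjn
    have hslack : (0 : ℝ) ≤ (m - 1 : ℕ) * (1 - α) ^ 2 := by positivity
    rcases i with _ | k
    · have hrow0 : c 0 j = D 0 j := by
        rcases j with _ | j
        · rw [hc.1, hD.1]
        · rw [hc.2.1, hD.2.1]
      exact ⟨hrow0.ge, by linarith⟩
    obtain ⟨l, rfl⟩ : ∃ l, j = l + 1 := ⟨j - 1, by omega⟩
    obtain ⟨hlo, hup⟩ := ih k (by omega) l (by omega)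
    have hk : (k : ℝ) ≤ (m - 1 : ℕ) := by exact_mod_cast (by omega : k ≤ m - 1)
    exact ⟨hlo, by nlinarith [sq_nonneg (1 - α)]⟩
  refine ⟨hc.dist_le_of_rows h0 h1 hmn hD fun i j hi hij hjn => (hrows i j hi hij hjn).1, ?_⟩
  have := hc.le_dist_add_of_rows h0 h1 hmn hD (by positivity)
    fun i j hi hij hjn => (hrows i j hi hij hjn).2
  rcases m with _ | k
  · simpa using this
  · simp only [constRate_succ, Nat.add_sub_cancel] at this
    push_cast
    linarith

theorem km_c_minus_d_bound_general (α : ℝ) (hα : α ∈ Set.Ico (1 / 2 : ℝ) 1)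
    (D : ℕ → ℕ → ℝ) (hD : IsKMDist (fun k => if k = 0 then 1 else α) D)
    (c : ℕ → ℕ → ℝ) (hc00 : c 0 0 = 0)
    (hc0 : ∀ k : ℕ, c 0 (k + 1) = 1)
    (hcrec : ∀ m n : ℕ, m ≤ n →
      c (m + 1) (n + 1) =
        planCost c m n (ztilde (fun k => if k = 0 then 1 else α) m n)) :
    ∀ m n : ℕ, m ≤ n →
      0 ≤ c (m + 1) (n + 1) - D (m + 1) (n + 1) ∧
      c (m + 1) (n + 1) - D (m + 1) (n + 1) ≤ 4 * m * (1 - α) ^ 2 := by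
  intro m n hmn
  have hc : IsKMProductCost (constRate α) c := ⟨hc00, hc0, hcrec⟩
  obtain ⟨hlo, hup⟩ :=
    hc.dist_le_and_le_dist_add (by linarith [hα.1]) hα.2.le hD m n hmn
  refine ⟨by linarith, ?_⟩
  nlinarith [mul_nonneg (Nat.cast_nonneg m : (0 : ℝ) ≤ m) (sq_nonneg (1 - α))]

/-- Proposition: for constant `α ∈ [1/2,1)`, the recursive quantities
satisfy `0 ≤ c_{mn} - d_{mn} ≤ 4m(1-α)²` for all `0 ≤ m ≤ n` (indices shifted). -/
theorem km_c_minus_d_bound (α : ℝ) (hα : α ∈ Set.Ico (1 / 2 : ℝ) 1)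
    (D : ℕ → ℕ → ℝ) (hD : IsKMDist (fun k => if k = 0 then 1 else α) D)
    (c : ℕ → ℕ → ℝ) (hc00 : c 0 0 = 0)
    (hc0 : ∀ k : ℕ, c 0 (k + 1) = 1) (hc0' : ∀ k : ℕ, c (k + 1) 0 = 1)
    (hcrec : ∀ m n : ℕ, m ≤ n →
      c (m + 1) (n + 1) =
        planCost c m n (ztilde (fun k => if k = 0 then 1 else α) m n)) :
    ∀ m n : ℕ, m ≤ n →
      0 ≤ c (m + 1) (n + 1) - D (m + 1) (n + 1) ∧
      c (m + 1) (n + 1) - D (m + 1) (n + 1) ≤ 4 * m * (1 - α) ^ 2 :=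
  km_c_minus_d_bound_general α hα D hD c hc00 hc0 hcrec
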